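/- Let R ∈ (0,1). There exists a sequence of parameters (m, r₁(m), r₂(m)) with m → ∞ such that the rate of BiD(m,r₁,r₂) (dimension divided by 3^m) converges to R, r₁/m → 2/3, r₂/m → 2/3, and liminf_{m→∞} log(d_min(BiD(m,r₁,r₂)))/log(3^m) ≥ log 6 / log 27 > 0.543. -/

import Mathlib

open Finset

abbrev F2 := ZMod 2
abbrev F4 := GaloisField 2 2

def A3 : Matrix (ZMod 3) (ZMod 3) F2 := !![1,1,1; 1,1,0; 1,0,1]

/-- The `m`-fold Kronecker power of `A3`, with rows and columns indexed by `Fin m → ZMod 3`. -/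
def A3pow (m : ℕ) : Matrix (Fin m → ZMod 3) (Fin m → ZMod 3) F2 :=
  fun r c => ∏ i, A3 (r i) (c i)

/-- The DFT coefficient at frequency `j` as an `F2`-linear functional. -/
noncomputable def dftL (m : ℕ) (α : F4) (j : Fin m → ZMod 3) :
    ((Fin m → ZMod 3) → F2) →ₗ[F2] F4 :=
  ∑ i : Fin m → ZMod 3,
    α ^ (∑ l, i l * j l).val • ((Algebra.linearMap F2 F4).comp (LinearMap.proj i))

/-- The abelian code with frequency weight set `W`. -/
noncomputable def abelianCode (m : ℕ) (α : F4) (W : Finset ℕ) :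
    Submodule F2 ((Fin m → ZMod 3) → F2) :=
  ⨅ j ∈ {j : Fin m → ZMod 3 | hammingNorm j ∉ W}, LinearMap.ker (dftL m α j)

/-- The BiD code as the span of the rows of `A3pow m` with weight in the prescribed range. -/
noncomputable def BiD (m r₁ r₂ : ℕ) : Submodule F2 ((Fin m → ZMod 3) → F2) :=
  Submodule.span F2 {a | ∃ r, (2^r₂ * 3^(m-r₂) ≤ hammingNorm (A3pow m r) ∧
    hammingNorm (A3pow m r) ≤ 2^r₁ * 3^(m-r₁)) ∧ a = A3pow m r}

/-- Minimum distance of a linear code. -/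
noncomputable def minDist {m : ℕ} (C : Submodule F2 ((Fin m → ZMod 3) → F2)) : ℕ :=
  sInf {d : ℕ | ∃ a ∈ C, a ≠ 0 ∧ hammingNorm a = d}

/-!
The rows of `A3pow m` are linearly independent and the row indexed by `r` has weight
`2 ^ wt r * 3 ^ (m - wt r)`, strictly decreasing in `wt r`; so `BiD m a b` is spanned by the rows
with `a ≤ wt r ≤ b` and has that many dimensions. Splitting off the first coordinate writes a
codeword as `(u + v + w | u + v | u + w)`; induction on `m` then gives
`d_min ≥ 2 ^ (a + b - m) * 3 ^ (m - b)`.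

The weight of a uniform vector of `F₃ᵐ` is binomial with parameters `m`, `2/3`. Chebyshev's
inequality and the fact that its largest point mass is `o(3 ^ m)` show that the quantiles
`r₁, r₂` at levels `(1 - R)/2` and `(1 + R)/2` satisfy `rᵢ / m → 2/3`, while the rate,
the mass between them, tends to `R`. The distance bound then gives
`log d_min / log 3 ^ m ≥ ((r₁ + r₂ - m) log 2 + (m - r₂) log 3) / (m log 3) → log 6 / log 27`.
-/

open Filter Topology
open scoped Matrix

section KroneckerPow

variable {α R ι : Type*} [CommSemiring R] [Fintype ι]

def kroneckerPow (M : Matrix α α R) (ι : Type*) [Fintype ι] : Matrix (ι → α) (ι → α) R :=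
  fun r c => ∏ i, M (r i) (c i)

theorem kroneckerPow_mul [Fintype α] [DecidableEq ι] (M N : Matrix α α R) :
    kroneckerPow M ι * kroneckerPow N ι = kroneckerPow (M * N) ι := by
  ext r c
  simp only [kroneckerPow, Matrix.mul_apply, Fintype.prod_sum, Finset.prod_mul_distrib]

theorem kroneckerPow_one [DecidableEq α] : kroneckerPow (1 : Matrix α α R) ι = 1 := by
  ext r c
  by_cases h : r = c
  · subst h; simp [kroneckerPow]
  · obtain ⟨i, hi⟩ := Function.ne_iff.1 h
    rw [Matrix.one_apply_ne h]
    exact Finset.prod_eq_zero (Finset.mem_univ i) (Matrix.one_apply_ne hi)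

theorem hammingNorm_kroneckerPow [Fintype α] [DecidableEq α] [Nontrivial R] [NoZeroDivisors R]
    [DecidableEq R] [DecidableEq ι] (M : Matrix α α R) (r : ι → α) :
    hammingNorm (kroneckerPow M ι r) = ∏ i, #{y | M (r i) y ≠ 0} := by
  rw [← Fintype.card_piFinset, hammingNorm]
  congr 1
  ext c
  rw [Finset.mem_filter, Fintype.mem_piFinset]
  simp [kroneckerPow, Finset.prod_eq_zero_iff]

end KroneckerPow

theorem A3pow_eq_kroneckerPow (m : ℕ) : A3pow m = kroneckerPow A3 (Fin m) := rfl

theorem isUnit_A3pow (m : ℕ) : IsUnit (A3pow m) := by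
  let B3 : Matrix (ZMod 3) (ZMod 3) F2 := !![1,1,1; 1,0,1; 1,1,0]
  have h : A3 * B3 = 1 := by decide
  have h' : A3pow m * kroneckerPow B3 (Fin m) = 1 := by
    rw [A3pow_eq_kroneckerPow, kroneckerPow_mul, h, kroneckerPow_one]
  exact (Matrix.isUnit_iff_isUnit_det _).2 (Matrix.isUnit_det_of_right_inverse h')

theorem vecMul_A3pow_eq_zero_iff {m : ℕ} {l : (Fin m → ZMod 3) → F2} :
    l ᵥ* A3pow m = 0 ↔ l = 0 :=
  ⟨fun h => Matrix.vecMul_injective_of_isUnit (isUnit_A3pow m) (by simp [h]),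
    fun h => by rw [h, Matrix.zero_vecMul]⟩

section FinCons

variable {α : Type*} {m : ℕ}

theorem sum_pi_fin_succ [Fintype α] {M : Type*} [AddCommMonoid M] (f : (Fin (m + 1) → α) → M) :
    ∑ r, f r = ∑ z, ∑ x : Fin m → α, f (Fin.cons z x) := by
  rw [← (Fin.consEquiv fun _ => α).sum_comp, Fintype.sum_prod_type]
  rfl

theorem hammingNorm_eq_sum_cons [Fintype α] {β : Type*} [Zero β] [DecidableEq β]
    (c : (Fin (m + 1) → α) → β) :
    hammingNorm c = ∑ z, hammingNorm fun x : Fin m → α => c (Fin.cons z x) := by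
  simp only [hammingNorm, Finset.card_filter]
  exact sum_pi_fin_succ _

variable [Zero α] [DecidableEq α]

theorem hammingNorm_cons (z : α) (x : Fin m → α) :
    hammingNorm (Fin.cons z x : Fin (m + 1) → α) = (if z = 0 then 0 else 1) + hammingNorm x := by
  simp only [hammingNorm, Fin.card_filter_univ_succ', Fin.cons_zero, Fin.cons_succ, ite_not]

end FinCons

theorem A3pow_cons {m : ℕ} (z y : ZMod 3) (r c : Fin m → ZMod 3) :
    A3pow (m + 1) (Fin.cons z r) (Fin.cons y c) = A3 z y * A3pow m r c := by
  simp only [A3pow, Fin.prod_univ_succ, Fin.cons_zero, Fin.cons_succ]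

def blockCoeff {m : ℕ} (l : (Fin (m + 1) → ZMod 3) → F2) (y : ZMod 3) :
    (Fin m → ZMod 3) → F2 :=
  fun r => ((fun z => l (Fin.cons z r)) ᵥ* A3) y

theorem vecMul_A3pow_succ_cons {m : ℕ} (l : (Fin (m + 1) → ZMod 3) → F2) (y : ZMod 3)
    (c : Fin m → ZMod 3) :
    (l ᵥ* A3pow (m + 1)) (Fin.cons y c) = (blockCoeff l y ᵥ* A3pow m) c := by
  simp only [Matrix.vecMul, dotProduct, blockCoeff, sum_pi_fin_succ (fun r => l r * _), A3pow_cons,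
    Finset.sum_mul]
  rw [Finset.sum_comm]
  exact Finset.sum_congr rfl fun r _ => Finset.sum_congr rfl fun z _ => by ring

theorem hammingNorm_vecMul_A3pow_succ {m : ℕ} (l : (Fin (m + 1) → ZMod 3) → F2) :
    hammingNorm (l ᵥ* A3pow (m + 1)) = ∑ y, hammingNorm (blockCoeff l y ᵥ* A3pow m) := by
  rw [hammingNorm_eq_sum_cons]
  simp only [vecMul_A3pow_succ_cons]

theorem vecMul_A3_eq_zero_iff (t : ZMod 3 → F2) : t ᵥ* A3 = 0 ↔ t = 0 := by
  revert t; decide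

/- `t z` is the coefficient of the row `Fin.cons z r`, whose index has one more nonzero
coordinate than `r` exactly when `z ≠ 0`. -/
theorem vecMul_A3_one_ne_zero_or_two_ne_zero (t : ZMod 3 → F2) (ht : t ᵥ* A3 ≠ 0) (y : ZMod 3)
    (hy : (t ᵥ* A3) y = 0) : t 1 ≠ 0 ∨ t 2 ≠ 0 := by
  revert t y; decide

theorem vecMul_A3_zero_ne_zero (t : ZMod 3 → F2) (ht : t ᵥ* A3 ≠ 0) {y y' : ZMod 3} (hne : y ≠ y')
    (hy : (t ᵥ* A3) y = 0) (hy' : (t ᵥ* A3) y' = 0) : t 0 ≠ 0 := by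
  revert t y y'; decide

/-- Integer exponents make the three recursions below exact, with no side conditions on
`a` and `b`. -/
noncomputable def distBound (m : ℕ) (a b : ℤ) : ℝ := 2 ^ (a + b - m) * 3 ^ ((m : ℤ) - b)

theorem distBound_succ_eq_three_mul (m : ℕ) (a b : ℤ) :
    distBound (m + 1) a b = 3 * distBound m (a - 1) b := by
  rw [distBound, distBound, show (m + 1 : ℕ) - b = (m - b) + 1 by push_cast; ring,
    zpow_add_one₀ three_ne_zero, show a + b - (m + 1 : ℕ) = a - 1 + b - m by push_cast; ring]
  ring

theorem distBound_succ_eq_two_mul (m : ℕ) (a b : ℤ) :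
    distBound (m + 1) a b = 2 * distBound m (a - 1) (b - 1) := by
  rw [distBound, distBound, show a + b - (m + 1 : ℕ) = a - 1 + (b - 1) - m + 1 by push_cast; ring,
    zpow_add_one₀ two_ne_zero, show (m + 1 : ℕ) - b = m - (b - 1) by push_cast; ring]
  ring

theorem distBound_succ (m : ℕ) (a b : ℤ) : distBound (m + 1) a b = distBound m a (b - 1) := by
  rw [distBound, distBound, show a + b - (m + 1 : ℕ) = a + (b - 1) - m by push_cast; ring,
    show (m + 1 : ℕ) - b = m - (b - 1) by push_cast; ring]

theorem distBound_zero_le_one {a b : ℤ} (ha : a ≤ 0) (hb : 0 ≤ b) : distBound 0 a b ≤ 1 := by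
  lift b to ℕ using hb
  calc distBound 0 a b ≤ 2 ^ (b : ℤ) * 3 ^ (-(b : ℤ)) := by
        unfold distBound
        gcongr <;> norm_num [ha]
    _ = 2 ^ b / 3 ^ b := by rw [zpow_neg, zpow_natCast, zpow_natCast, div_eq_mul_inv]
    _ ≤ 1 := div_le_one_of_le₀ (pow_le_pow_left₀ (by norm_num) (by norm_num) b) (by positivity)

def IsWeightSupported {m : ℕ} (l : (Fin m → ZMod 3) → F2) (a b : ℤ) : Prop :=
  ∀ r, l r ≠ 0 → a ≤ hammingNorm r ∧ (hammingNorm r : ℤ) ≤ b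

section BlockCoeff

variable {m : ℕ} {a b : ℤ} {l : (Fin (m + 1) → ZMod 3) → F2}

theorem IsWeightSupported.weight_cons (hl : IsWeightSupported l a b) {z : ZMod 3}
    {r : Fin m → ZMod 3} (h : l (Fin.cons z r) ≠ 0) :
    a ≤ (if z = 0 then 0 else 1) + hammingNorm r ∧
      (if z = 0 then 0 else 1) + (hammingNorm r : ℤ) ≤ b := by
  have := hl _ h
  rw [hammingNorm_cons] at this
  split_ifs at this ⊢ <;> push_cast at this <;> omega

theorem isWeightSupported_blockCoeff (hl : IsWeightSupported l a b) (y : ZMod 3) :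
    IsWeightSupported (blockCoeff l y) (a - 1) b := by
  intro r hr
  have ht : (fun z => l (Fin.cons z r)) ≠ 0 := by
    intro h
    exact hr (by simp only [blockCoeff, h, Matrix.zero_vecMul, Pi.zero_apply])
  obtain ⟨z, hz⟩ := Function.ne_iff.1 ht
  have := hl.weight_cons hz
  split_ifs at this <;> omega

theorem isWeightSupported_blockCoeff_of_eq_zero (hl : IsWeightSupported l a b) {y y' : ZMod 3}
    (hy' : blockCoeff l y' = 0) :
    IsWeightSupported (blockCoeff l y) (a - 1) (b - 1) := by
  intro r hr
  have ht : (fun z => l (Fin.cons z r)) ᵥ* A3 ≠ 0 := fun h => hr (congrFun h y)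
  have hlow := (isWeightSupported_blockCoeff hl y r hr).1
  rcases vecMul_A3_one_ne_zero_or_two_ne_zero _ ht y' (congrFun hy' r) with h | h
  · have := hl.weight_cons h; simp only [one_ne_zero, if_false] at this; omega
  · have := hl.weight_cons h
    simp only [show (2 : ZMod 3) ≠ 0 by decide, if_false] at this; omega

theorem isWeightSupported_blockCoeff_of_two_eq_zero (hl : IsWeightSupported l a b)
    {y y' y'' : ZMod 3} (hne : y' ≠ y'') (hy' : blockCoeff l y' = 0)
    (hy'' : blockCoeff l y'' = 0) :
    IsWeightSupported (blockCoeff l y) a (b - 1) := by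
  intro r hr
  have ht : (fun z => l (Fin.cons z r)) ᵥ* A3 ≠ 0 := fun h => hr (congrFun h y)
  have hupp := (isWeightSupported_blockCoeff_of_eq_zero hl hy' r hr).2
  have := hl.weight_cons (vecMul_A3_zero_ne_zero _ ht hne (congrFun hy' r) (congrFun hy'' r))
  simp only [if_true, zero_add] at this
  exact ⟨this.1, hupp⟩

end BlockCoeff

theorem exists_blockCoeff_ne_zero {m : ℕ} {l : (Fin (m + 1) → ZMod 3) → F2} (hl : l ≠ 0) :
    ∃ y, blockCoeff l y ≠ 0 := by
  by_contra! h
  refine hl (funext fun r => ?_)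
  have ht : (fun z => l (Fin.cons z (Fin.tail r))) = 0 :=
    (vecMul_A3_eq_zero_iff _).1 (funext fun y => congrFun (h y) (Fin.tail r))
  simpa [Fin.cons_self_tail] using congrFun ht (r 0)

/-- If `k` of the three blocks are nonzero, the vanishing ones narrow the weight range of the
others just enough that `k` copies of the bound one dimension down add up to
`distBound (m + 1) a b`. -/
theorem distBound_succ_le_card_mul {m : ℕ} {a b : ℤ} {l : (Fin (m + 1) → ZMod 3) → F2}
    (ih : ∀ {a b : ℤ} {l' : (Fin m → ZMod 3) → F2}, l' ≠ 0 → IsWeightSupported l' a b →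
      distBound m a b ≤ hammingNorm (l' ᵥ* A3pow m))
    (hl : IsWeightSupported l a b) {y : ZMod 3} (hy : blockCoeff l y ≠ 0) :
    distBound (m + 1) a b ≤
      #{y | blockCoeff l y ≠ 0} * hammingNorm (blockCoeff l y ᵥ* A3pow m) := by
  have hYZ : #{y | blockCoeff l y = 0} + #{y | blockCoeff l y ≠ 0} = 3 :=
    Finset.card_filter_add_card_filter_not _
  have hY : 0 < #{y | blockCoeff l y ≠ 0} := Finset.card_pos.2 ⟨y, by simpa using hy⟩
  have : #{y | blockCoeff l y ≠ 0} ≤ 3 := by omega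
  interval_cases hk : #{y | blockCoeff l y ≠ 0}
  · obtain ⟨y', hy', y'', hy'', hne⟩ :=
      Finset.one_lt_card.1 (by omega : 1 < #{y | blockCoeff l y = 0})
    rw [distBound_succ, Nat.cast_one, one_mul]
    exact ih hy (isWeightSupported_blockCoeff_of_two_eq_zero hl hne
      (Finset.mem_filter.1 hy').2 (Finset.mem_filter.1 hy'').2)
  · obtain ⟨y', hy'⟩ := Finset.card_pos.1 (by omega : 0 < #{y | blockCoeff l y = 0})
    rw [distBound_succ_eq_two_mul, Nat.cast_two]
    gcongr
    exact ih hy (isWeightSupported_blockCoeff_of_eq_zero hl (Finset.mem_filter.1 hy').2)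
  · rw [distBound_succ_eq_three_mul, Nat.cast_ofNat]
    gcongr
    exact ih hy (isWeightSupported_blockCoeff hl y)

theorem distBound_le_hammingNorm_vecMul_A3pow (m : ℕ) {a b : ℤ} {l : (Fin m → ZMod 3) → F2}
    (hl0 : l ≠ 0) (hl : IsWeightSupported l a b) :
    distBound m a b ≤ hammingNorm (l ᵥ* A3pow m) := by
  induction m generalizing a b with
  | zero =>
    obtain ⟨r, hr⟩ := Function.ne_iff.1 hl0
    have hwt := hl r hr
    rw [hammingNorm_eq_zero.2 (Subsingleton.elim r 0)] at hwt
    have hpos : 1 ≤ hammingNorm (l ᵥ* A3pow 0) :=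
      hammingNorm_pos_iff.2 (mt vecMul_A3pow_eq_zero_iff.1 hl0)
    calc distBound 0 a b ≤ 1 := distBound_zero_le_one (by simpa using hwt.1) (by simpa using hwt.2)
      _ ≤ _ := by exact_mod_cast hpos
  | succ m ih =>
    obtain ⟨y₀, hy₀⟩ := exists_blockCoeff_ne_zero hl0
    set Y : Finset (ZMod 3) := {y | blockCoeff l y ≠ 0}
    have hY : (0 : ℝ) < #Y := by exact_mod_cast Finset.card_pos.2 ⟨y₀, by simpa [Y] using hy₀⟩
    calc distBound (m + 1) a b = #Y • (distBound (m + 1) a b / #Y) := by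
          rw [nsmul_eq_mul]; field_simp
      _ ≤ ∑ y ∈ Y, (hammingNorm (blockCoeff l y ᵥ* A3pow m) : ℝ) :=
          Finset.card_nsmul_le_sum _ _ _ fun y hy => (div_le_iff₀' hY).2
            (distBound_succ_le_card_mul ih hl (Finset.mem_filter.1 hy).2)
      _ ≤ ∑ y, (hammingNorm (blockCoeff l y ᵥ* A3pow m) : ℝ) :=
          Finset.sum_le_sum_of_subset_of_nonneg (Finset.subset_univ _) fun _ _ _ => by positivity
      _ = hammingNorm (l ᵥ* A3pow (m + 1)) := by
          rw [hammingNorm_vecMul_A3pow_succ]; push_cast; rfl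

theorem hammingNorm_A3pow {m : ℕ} (r : Fin m → ZMod 3) :
    hammingNorm (A3pow m r) = 2 ^ hammingNorm r * 3 ^ (m - hammingNorm r) := by
  have hrow : ∀ z : ZMod 3, #{y | A3 z y ≠ 0} = if z = 0 then 3 else 2 := by decide
  have hzero : #{i | r i = 0} = m - hammingNorm r := by
    have := Finset.card_filter_add_card_filter_not (s := Finset.univ) fun i => r i = 0
    simp only [Finset.card_univ, Fintype.card_fin] at this
    simp only [hammingNorm, ne_eq]
    omega
  rw [A3pow_eq_kroneckerPow, hammingNorm_kroneckerPow]
  simp only [hrow, Finset.prod_ite, Finset.prod_const, hzero, hammingNorm]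
  ring

theorem strictAntiOn_two_pow_mul_three_pow_sub (m : ℕ) :
    StrictAntiOn (fun w => 2 ^ w * 3 ^ (m - w)) (Set.Iic m) := by
  intro w _ w' hw' hlt
  obtain ⟨e, rfl⟩ := Nat.exists_eq_add_of_lt hlt
  have hsplit : m - w = (m - (w + e + 1)) + (e + 1) := by
    simp only [Set.mem_Iic] at hw'; omega
  have hpos : 0 < 2 ^ w * 3 ^ (m - (w + e + 1)) := by positivity
  calc 2 ^ (w + e + 1) * 3 ^ (m - (w + e + 1)) = 2 ^ w * 3 ^ (m - (w + e + 1)) * 2 ^ (e + 1) := by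
        ring
    _ < 2 ^ w * 3 ^ (m - (w + e + 1)) * 3 ^ (e + 1) :=
        Nat.mul_lt_mul_of_pos_left (Nat.pow_lt_pow_left (by norm_num) (by omega)) hpos
    _ = 2 ^ w * 3 ^ (m - w) := by rw [hsplit, pow_add]; ring

theorem BiD_eq_span {m a b : ℕ} (ha : a ≤ m) (hb : b ≤ m) :
    BiD m a b =
      Submodule.span F2 ((A3pow m).row '' {r | a ≤ hammingNorm r ∧ hammingNorm r ≤ b}) := by
  have hanti := strictAntiOn_two_pow_mul_three_pow_sub m
  have hw : ∀ r : Fin m → ZMod 3, hammingNorm r ∈ Set.Iic m := fun r =>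
    hammingNorm_le_card_fintype.trans (Fintype.card_fin m).le
  rw [BiD]
  congr 1
  ext x
  simp only [hammingNorm_A3pow, hanti.le_iff_ge hb (hw _), hanti.le_iff_ge (hw _) ha,
    Set.mem_image]
  exact ⟨fun ⟨r, hr, hx⟩ => ⟨r, hr.symm, hx.symm⟩, fun ⟨r, hr, hx⟩ => ⟨r, hr.symm, hx.symm⟩⟩

theorem finrank_BiD {m a b : ℕ} (ha : a ≤ m) (hb : b ≤ m) :
    Module.finrank F2 (BiD m a b) =
      #{r : Fin m → ZMod 3 | a ≤ hammingNorm r ∧ hammingNorm r ≤ b} := by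
  have hli : LinearIndependent F2
      fun r : ({r | a ≤ hammingNorm r ∧ hammingNorm r ≤ b} : Set (Fin m → ZMod 3)) =>
        (A3pow m).row r :=
    (Matrix.linearIndependent_rows_iff_isUnit.2 (isUnit_A3pow m)).comp _ Subtype.val_injective
  rw [BiD_eq_span ha hb, Set.image_eq_range, finrank_span_eq_card hli]
  simp [Fintype.card_subtype]

theorem exists_isWeightSupported_of_mem_BiD {m a b : ℕ} (ha : a ≤ m) (hb : b ≤ m)
    {x : (Fin m → ZMod 3) → F2} (hx : x ∈ BiD m a b) :
    ∃ l, IsWeightSupported l a b ∧ l ᵥ* A3pow m = x := by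
  rw [BiD_eq_span ha hb] at hx
  obtain ⟨l, hl, rfl⟩ := (Finsupp.mem_span_image_iff_linearCombination F2).1 hx
  refine ⟨l, fun r hr => ?_, ?_⟩
  · by_contra h
    exact hr ((Finsupp.mem_supported' F2 l).1 hl r (by exact_mod_cast h))
  · rw [Finsupp.linearCombination_apply, Finsupp.sum_fintype _ _ (by simp), Matrix.vecMul_eq_sum]
    rfl

theorem exists_hammingNorm_eq {m w : ℕ} (hw : w ≤ m) : ∃ r : Fin m → ZMod 3, hammingNorm r = w := by
  have hcard : #{i : Fin m | (i : ℕ) < w} = w := by rw [Fin.card_filter_val_lt, min_eq_right hw]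
  refine ⟨fun i => if (i : ℕ) < w then 1 else 0, Eq.trans ?_ hcard⟩
  rw [hammingNorm]
  congr 1
  ext i
  simp

theorem minDist_le {m : ℕ} (C : Submodule F2 ((Fin m → ZMod 3) → F2)) : minDist C ≤ 3 ^ m := by
  rcases Set.eq_empty_or_nonempty {d | ∃ x ∈ C, x ≠ 0 ∧ hammingNorm x = d} with h | h
  · simp [minDist, h]
  · obtain ⟨x, -, -, hx⟩ := Nat.sInf_mem h
    rw [minDist, ← hx]
    simpa using hammingNorm_le_card_fintype (x := x)

theorem le_minDist {m : ℕ} {C : Submodule F2 ((Fin m → ZMod 3) → F2)} {D : ℝ}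
    (hC : ∃ x ∈ C, x ≠ 0) (hD : ∀ x ∈ C, x ≠ 0 → D ≤ hammingNorm x) : D ≤ minDist C := by
  obtain ⟨x, hxC, hx0⟩ := hC
  have hne : {d | ∃ x ∈ C, x ≠ 0 ∧ hammingNorm x = d}.Nonempty := ⟨_, x, hxC, hx0, rfl⟩
  obtain ⟨y, hyC, hy0, hy⟩ := Nat.sInf_mem hne
  rw [minDist, ← hy]
  exact hD y hyC hy0

theorem distBound_le_minDist_BiD {m a b : ℕ} (hab : a ≤ b) (hb : b ≤ m) :
    distBound m a b ≤ minDist (BiD m a b) := by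
  obtain ⟨r, hr⟩ := exists_hammingNorm_eq hb
  refine le_minDist ⟨(A3pow m).row r, ?_, ?_⟩ fun x hx hx0 => ?_
  · rw [BiD_eq_span (hab.trans hb) hb]
    exact Submodule.subset_span ⟨r, ⟨hr ▸ hab, hr.le⟩, rfl⟩
  · exact (Matrix.linearIndependent_rows_iff_isUnit.2 (isUnit_A3pow m)).ne_zero r
  · obtain ⟨l, hl, rfl⟩ := exists_isWeightSupported_of_mem_BiD (hab.trans hb) hb hx
    exact distBound_le_hammingNorm_vecMul_A3pow m (by rintro rfl; simp at hx0) hl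

theorem sum_hammingNorm_succ {M : Type*} [AddCommMonoid M] (m : ℕ) (g : ℕ → M) :
    ∑ r : Fin (m + 1) → ZMod 3, g (hammingNorm r) =
      ∑ x : Fin m → ZMod 3, (g (hammingNorm x) + 2 • g (hammingNorm x + 1)) := by
  rw [sum_pi_fin_succ, Finset.sum_comm]
  refine Finset.sum_congr rfl fun x _ => ?_
  rw [show ∀ f : ZMod 3 → M, ∑ z, f z = f 0 + f 1 + f 2 from Fin.sum_univ_three]
  simp [hammingNorm_cons, show (2 : ZMod 3) ≠ 0 by decide, two_nsmul, add_comm, add_left_comm]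

def weightCount (m w : ℕ) : ℕ := #{r : Fin m → ZMod 3 | hammingNorm r = w}

theorem weightCount_eq (m w : ℕ) : weightCount m w = m.choose w * 2 ^ w := by
  induction m generalizing w with
  | zero => cases w <;> simp [weightCount, hammingNorm]
  | succ m ih =>
    have h : ∀ n v, weightCount n v = ∑ r : Fin n → ZMod 3, if hammingNorm r = v then 1 else 0 :=
      fun n v => Finset.card_filter _ _
    rw [h, sum_hammingNorm_succ (g := fun v => if v = w then 1 else 0), Finset.sum_add_distrib,
      ← Finset.smul_sum, ← h, ih]
    cases w with
    | zero => simp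
    | succ w =>
      simp only [add_left_inj, ← h, ih, Nat.choose_succ_succ, smul_eq_mul]
      ring

theorem sum_sq_three_mul_hammingNorm_sub (m : ℕ) :
    ∑ r : Fin m → ZMod 3, (3 * (hammingNorm r : ℝ) - 2 * m) ^ 2 = (2 * m * 3 ^ m : ℝ) := by
  induction m with
  | zero => simp [hammingNorm]
  | succ m ih =>
    have h := sum_hammingNorm_succ m fun w => (3 * (w : ℝ) - 2 * ((m + 1 : ℕ) : ℝ)) ^ 2
    calc ∑ r : Fin (m + 1) → ZMod 3, (3 * (hammingNorm r : ℝ) - 2 * ((m + 1 : ℕ) : ℝ)) ^ 2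
        = ∑ x : Fin m → ZMod 3, (3 * (3 * (hammingNorm x : ℝ) - 2 * m) ^ 2 + 6) := by
          rw [h]
          refine Finset.sum_congr rfl fun x _ => ?_
          push_cast
          ring
      _ = 2 * ((m + 1 : ℕ) : ℝ) * 3 ^ (m + 1) := by
          rw [Finset.sum_add_distrib, ← Finset.mul_sum, ih]
          simp only [Finset.sum_const, Finset.card_univ, Fintype.card_pi, ZMod.card,
            Finset.prod_const, Fintype.card_fin, nsmul_eq_mul, Nat.cast_pow, Nat.cast_ofNat,
            Nat.cast_add, Nat.cast_one]
          ring

theorem card_mul_sq_le_of_le_abs (m : ℕ) {t : ℝ} (ht : 0 ≤ t) :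
    (#{r : Fin m → ZMod 3 | t ≤ |3 * (hammingNorm r : ℝ) - 2 * m|} : ℝ) * t ^ 2 ≤
      2 * m * 3 ^ m := by
  calc (#{r : Fin m → ZMod 3 | t ≤ |3 * (hammingNorm r : ℝ) - 2 * m|} : ℝ) * t ^ 2
      = ∑ r ∈ {r : Fin m → ZMod 3 | t ≤ |3 * (hammingNorm r : ℝ) - 2 * m|}, t ^ 2 := by
        rw [Finset.sum_const, nsmul_eq_mul]
    _ ≤ ∑ r ∈ {r : Fin m → ZMod 3 | t ≤ |3 * (hammingNorm r : ℝ) - 2 * m|},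
          (3 * (hammingNorm r : ℝ) - 2 * m) ^ 2 :=
        Finset.sum_le_sum fun r hr =>
          sq_abs (3 * (hammingNorm r : ℝ) - 2 * m) ▸
            pow_le_pow_left₀ ht (Finset.mem_filter.1 hr).2 2
    _ ≤ ∑ r : Fin m → ZMod 3, (3 * (hammingNorm r : ℝ) - 2 * m) ^ 2 :=
        Finset.sum_le_sum_of_subset_of_nonneg (Finset.filter_subset _ _) fun _ _ _ => sq_nonneg _
    _ = 2 * m * 3 ^ m := sum_sq_three_mul_hammingNorm_sub m

theorem eventually_card_le_abs_lt {δ ε : ℝ} (hδ : 0 < δ) (hε : 0 < ε) :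
    ∀ᶠ m : ℕ in atTop,
      (#{r : Fin m → ZMod 3 | δ * m ≤ |3 * (hammingNorm r : ℝ) - 2 * m|} : ℝ) < ε * 3 ^ m := by
  filter_upwards [(tendsto_natCast_atTop_atTop (R := ℝ)).eventually_gt_atTop (2 / (δ ^ 2 * ε))]
    with m hm
  have hm0 : (0 : ℝ) < m := lt_trans (by positivity) hm
  have hcheb := card_mul_sq_le_of_le_abs m (t := δ * m) (by positivity)
  rw [div_lt_iff₀ (by positivity)] at hm
  have : (#{r : Fin m → ZMod 3 | δ * m ≤ |3 * (hammingNorm r : ℝ) - 2 * m|} : ℝ) * (δ ^ 2 * m ^ 2)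
      < ε * 3 ^ m * (δ ^ 2 * m ^ 2) := by
    calc _ = _ := by ring
      _ ≤ (2 * m * 3 ^ m : ℝ) := hcheb
      _ = 2 * (m * 3 ^ m) := by ring
      _ < m * (δ ^ 2 * ε) * (m * 3 ^ m) := mul_lt_mul_of_pos_right hm (by positivity)
      _ = ε * 3 ^ m * (δ ^ 2 * m ^ 2) := by ring
  exact lt_of_mul_lt_mul_right this (by positivity)

theorem sum_weightCount_le (m : ℕ) (s : Finset ℕ) : ∑ w ∈ s, weightCount m w ≤ 3 ^ m := by
  calc ∑ w ∈ s, weightCount m w = #(s.biUnion fun w => {r : Fin m → ZMod 3 | hammingNorm r = w}) :=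
        (Finset.card_biUnion fun w _ v _ hne =>
          Finset.disjoint_filter.2 fun _ _ h₁ h₂ => hne (h₁.symm.trans h₂)).symm
    _ ≤ #(Finset.univ : Finset (Fin m → ZMod 3)) := Finset.card_le_univ _
    _ = 3 ^ m := by simp

theorem weightCount_succ_mul (m w : ℕ) :
    weightCount m (w + 1) * (w + 1) = weightCount m w * (2 * (m - w)) := by
  rw [weightCount_eq, weightCount_eq]
  calc m.choose (w + 1) * 2 ^ (w + 1) * (w + 1) = m.choose (w + 1) * (w + 1) * 2 ^ (w + 1) := by
        ring
    _ = m.choose w * (m - w) * 2 ^ (w + 1) := by rw [Nat.choose_succ_right_eq]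
    _ = m.choose w * 2 ^ w * (2 * (m - w)) := by ring

theorem three_mul_le_of_forall_weightCount_le {m w₀ : ℕ} (hw₀ : w₀ ≤ m)
    (hmax : ∀ w, weightCount m w ≤ weightCount m w₀) : 3 * w₀ ≤ 2 * m + 2 := by
  obtain _ | v := w₀
  · omega
  have hpos : 0 < weightCount m (v + 1) := by
    rw [weightCount_eq]
    exact Nat.mul_pos (Nat.choose_pos hw₀) (by positivity)
  have h : weightCount m (v + 1) * (v + 1) ≤ weightCount m (v + 1) * (2 * (m - v)) :=
    weightCount_succ_mul m v ▸ Nat.mul_le_mul_right _ (hmax v)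
  have := Nat.le_of_mul_le_mul_left h hpos
  omega

theorem weightCount_mul_le_weightCount_succ {m w K : ℕ} (hw : 3 * w + 1 ≤ 2 * m + 3 * K)
    (hm : 9 * K ^ 2 ≤ m) :
    (2 * K - 1 : ℝ) * weightCount m w ≤ 2 * K * weightCount m (w + 1) := by
  have hK : K ≤ K ^ 2 := Nat.le_self_pow (by norm_num) K
  have hwm : w ≤ m := by omega
  have hratio : (weightCount m (w + 1) : ℝ) * (w + 1) = weightCount m w * (2 * ((m : ℝ) - w)) := by
    have h := congrArg (Nat.cast (R := ℝ)) (weightCount_succ_mul m w)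
    push_cast [Nat.cast_sub hwm] at h
    exact h
  have hwR : (3 * w + 1 : ℝ) ≤ 2 * m + 3 * K := by exact_mod_cast hw
  have hmR : (9 * K ^ 2 : ℝ) ≤ m := by exact_mod_cast hm
  have hc : (0 : ℝ) ≤ weightCount m w := by positivity
  have hineq : (2 * K - 1 : ℝ) * (w + 1) ≤ 2 * K * (2 * ((m : ℝ) - w)) := by nlinarith
  have : (2 * K - 1 : ℝ) * weightCount m w * (w + 1) ≤ 2 * K * weightCount m (w + 1) * (w + 1) := by
    calc (2 * K - 1 : ℝ) * weightCount m w * (w + 1)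
        = weightCount m w * ((2 * K - 1) * (w + 1)) := by ring
      _ ≤ weightCount m w * (2 * K * (2 * ((m : ℝ) - w))) := mul_le_mul_of_nonneg_left hineq hc
      _ = 2 * K * weightCount m (w + 1) * (w + 1) := by
          rw [mul_assoc _ _ ((w : ℝ) + 1), hratio]; ring
  exact le_of_mul_le_mul_right this (by positivity)

/-- Past the mode `w₀`, where `3 * w₀ ≤ 2 * m + 2`, each of the next `K` counts is at least
`1 - 1 / (2 * K)` times the previous one, so all of them are at least half the maximum. -/
theorem add_one_mul_weightCount_le {K m : ℕ} (hK : 0 < K) (hm : 9 * K ^ 2 ≤ m) (w : ℕ) :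
    ((K : ℝ) + 1) * weightCount m w ≤ 2 * 3 ^ m := by
  obtain ⟨w₀, hw₀, hmax⟩ :=
    Finset.exists_max_image (Finset.range (m + 1)) (weightCount m) ⟨0, by simp⟩
  rw [Finset.mem_range] at hw₀
  have hmode : ∀ w, weightCount m w ≤ weightCount m w₀ := fun w => by
    by_cases hw : w ≤ m
    · exact hmax w (Finset.mem_range.2 (by omega))
    · simp [weightCount_eq, Nat.choose_eq_zero_of_lt (not_le.1 hw)]
  have hloc := three_mul_le_of_forall_weightCount_le (by omega) hmode
  set c₀ : ℝ := (weightCount m w₀ : ℝ)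
  have hc₀ : ∀ w, (weightCount m w : ℝ) ≤ c₀ := fun w => by simp only [c₀]; exact_mod_cast hmode w
  have hchain : ∀ j ≤ K, c₀ * (2 * K - j) ≤ 2 * K * weightCount m (w₀ + j) := by
    intro j hj
    induction j with
    | zero => simp [c₀, mul_comm]
    | succ j ih =>
      have hstep := weightCount_mul_le_weightCount_succ (w := w₀ + j) (by omega) hm
      rw [← add_assoc]
      push_cast
      linarith [ih (by omega), hc₀ (w₀ + j)]
  have hsum : ((K : ℝ) + 1) * c₀ ≤ 2 * 3 ^ m := by
    have hwin : ∀ j ∈ Finset.range (K + 1), c₀ ≤ 2 * weightCount m (w₀ + j) := by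
      intro j hj
      have := hchain j (by simpa [Nat.lt_succ_iff] using hj)
      have hj' : (j : ℝ) ≤ K := by exact_mod_cast Nat.lt_succ_iff.1 (Finset.mem_range.1 hj)
      have hK' : (0 : ℝ) < K := by exact_mod_cast hK
      have : (K : ℝ) * c₀ ≤ K * (2 * weightCount m (w₀ + j)) := by
        nlinarith [mul_nonneg (show (0 : ℝ) ≤ c₀ by positivity) (sub_nonneg.2 hj')]
      exact le_of_mul_le_mul_left this hK'
    have htot : (∑ j ∈ Finset.range (K + 1), weightCount m (w₀ + j) : ℝ) ≤ 3 ^ m := by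
      have := sum_weightCount_le m ((Finset.range (K + 1)).map (addLeftEmbedding w₀))
      rw [Finset.sum_map] at this
      exact_mod_cast this
    calc ((K : ℝ) + 1) * c₀ = ∑ j ∈ Finset.range (K + 1), c₀ := by simp
      _ ≤ ∑ j ∈ Finset.range (K + 1), 2 * (weightCount m (w₀ + j) : ℝ) := Finset.sum_le_sum hwin
      _ ≤ 2 * 3 ^ m := by rw [← Finset.mul_sum]; linarith
  calc ((K : ℝ) + 1) * weightCount m w ≤ (K + 1) * c₀ := by gcongr; exact hc₀ w
    _ ≤ 2 * 3 ^ m := hsum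

theorem tendsto_weightCount_div (w : ℕ → ℕ) :
    Tendsto (fun m => (weightCount m (w m) : ℝ) / 3 ^ m) atTop (𝓝 0) := by
  refine tendsto_order.2 ⟨fun a ha => Eventually.of_forall fun m => ?_, fun a ha => ?_⟩
  · exact ha.trans_le (by positivity)
  obtain ⟨K, hK⟩ := exists_nat_gt (2 / a)
  filter_upwards [eventually_ge_atTop (9 * K ^ 2)] with m hm
  have h := add_one_mul_weightCount_le (Nat.cast_pos.1 ((div_pos two_pos ha).trans hK)) hm (w m)
  rw [div_lt_iff₀ (by positivity)]
  rw [div_lt_iff₀ ha] at hK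
  nlinarith [show (0 : ℝ) ≤ weightCount m (w m) by positivity, pow_pos (three_pos (α := ℝ)) m]

def weightCountBelow (m b : ℕ) : ℕ := #{r : Fin m → ZMod 3 | hammingNorm r < b}

theorem weightCountBelow_succ (m b : ℕ) :
    weightCountBelow m (b + 1) = weightCountBelow m b + weightCount m b := by
  simp only [weightCountBelow, weightCount, Finset.card_filter, ← Finset.sum_add_distrib]
  refine Finset.sum_congr rfl fun r _ => ?_
  split_ifs <;> omega

theorem weightCountBelow_of_lt {m b : ℕ} (hb : m < b) : weightCountBelow m b = 3 ^ m := by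
  rw [weightCountBelow, Finset.filter_true_of_mem fun r _ =>
    hammingNorm_le_card_fintype.trans_lt (by simpa using hb)]
  simp

theorem card_weight_mem_Icc_add_weightCountBelow {m a b : ℕ} (hab : a ≤ b + 1) :
    #{r : Fin m → ZMod 3 | a ≤ hammingNorm r ∧ hammingNorm r ≤ b} + weightCountBelow m a =
      weightCountBelow m (b + 1) := by
  simp only [weightCountBelow, Finset.card_filter, ← Finset.sum_add_distrib]
  refine Finset.sum_congr rfl fun r _ => ?_
  split_ifs <;> omega

noncomputable def threshold (c : ℝ) (m : ℕ) : ℕ :=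
  sInf {b | c * 3 ^ m ≤ weightCountBelow m (b + 1)}

section Threshold

variable {c : ℝ} {m : ℕ}

theorem self_mem_threshold_set (hc : c ≤ 1) (m : ℕ) :
    m ∈ {b | c * 3 ^ m ≤ weightCountBelow m (b + 1)} := by
  show c * 3 ^ m ≤ (weightCountBelow m (m + 1) : ℝ)
  rw [weightCountBelow_of_lt (Nat.lt_succ_self m)]
  push_cast
  exact mul_le_of_le_one_left (by positivity) hc

theorem le_weightCountBelow_threshold_succ (hc : c ≤ 1) :
    c * 3 ^ m ≤ weightCountBelow m (threshold c m + 1) :=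
  Nat.sInf_mem ⟨m, self_mem_threshold_set hc m⟩

theorem threshold_le_self (hc : c ≤ 1) : threshold c m ≤ m :=
  Nat.sInf_le (self_mem_threshold_set hc m)

theorem threshold_mono {c' : ℝ} (h : c ≤ c') (hc' : c' ≤ 1) : threshold c m ≤ threshold c' m :=
  Nat.sInf_le ((mul_le_mul_of_nonneg_right h (by positivity)).trans
    (le_weightCountBelow_threshold_succ hc'))

theorem weightCountBelow_threshold_lt (hc : 0 < c) :
    (weightCountBelow m (threshold c m) : ℝ) < c * 3 ^ m := by
  rcases h : threshold c m with _ | b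
  · simp [weightCountBelow]; positivity
  · have := Nat.notMem_of_lt_sInf (h ▸ Nat.lt_succ_self b : b < threshold c m)
    simpa using this

theorem tendsto_weightCountBelow_threshold (hc : 0 < c) (hc' : c ≤ 1) :
    Tendsto (fun m => (weightCountBelow m (threshold c m) : ℝ) / 3 ^ m) atTop
      (𝓝 c) := by
  have h := (tendsto_weightCount_div (threshold c)).const_sub c
  rw [sub_zero] at h
  refine tendsto_of_tendsto_of_tendsto_of_le_of_le h tendsto_const_nhds (fun m => ?_) fun m => ?_
  · have := le_weightCountBelow_threshold_succ (m := m) hc'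
    rw [weightCountBelow_succ, Nat.cast_add] at this
    rw [sub_le_iff_le_add, ← add_div, le_div_iff₀ (by positivity)]
    exact this
  · exact (div_le_iff₀ (by positivity)).2 (weightCountBelow_threshold_lt hc).le

theorem tendsto_weightCountBelow_threshold_succ (hc : 0 < c) (hc' : c ≤ 1) :
    Tendsto (fun m => (weightCountBelow m (threshold c m + 1) : ℝ) / 3 ^ m) atTop
      (𝓝 c) := by
  have h := (tendsto_weightCount_div (threshold c)).const_add c
  rw [add_zero] at h
  refine tendsto_of_tendsto_of_tendsto_of_le_of_le tendsto_const_nhds h (fun m => ?_) fun m => ?_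
  · exact (le_div_iff₀ (by positivity)).2 (le_weightCountBelow_threshold_succ hc')
  · rw [weightCountBelow_succ, Nat.cast_add, add_div]
    gcongr
    exact (div_le_iff₀ (by positivity)).2 (weightCountBelow_threshold_lt hc).le

theorem eventually_lt_threshold_div {a : ℝ} (ha : a < 2 / 3) (hc : 0 < c) (hc' : c ≤ 1) :
    ∀ᶠ m : ℕ in atTop, a < threshold c m / m := by
  filter_upwards [eventually_card_le_abs_lt (δ := 2 - 3 * a) (by linarith) hc,
    eventually_gt_atTop 0] with m hfar hm
  have hm' : (0 : ℝ) < m := by exact_mod_cast hm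
  rw [lt_div_iff₀ hm']
  by_contra! hle
  have hsub : weightCountBelow m (threshold c m + 1) ≤
      #{r : Fin m → ZMod 3 | (2 - 3 * a) * m ≤ |3 * (hammingNorm r : ℝ) - 2 * m|} := by
    refine Finset.card_le_card (Finset.monotone_filter_right _ fun r _ hr => ?_)
    have : (hammingNorm r : ℝ) ≤ threshold c m := by exact_mod_cast Nat.lt_succ_iff.1 hr
    exact le_abs.2 (Or.inr (by linarith))
  have := le_weightCountBelow_threshold_succ (m := m) hc'
  have : (weightCountBelow m (threshold c m + 1) : ℝ) ≤ _ := Nat.cast_le.2 hsub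
  linarith

theorem eventually_threshold_div_lt {a : ℝ} (ha : 2 / 3 < a) (hc : 0 < c) (hc' : c < 1) :
    ∀ᶠ m : ℕ in atTop, threshold c m / m < a := by
  filter_upwards [eventually_card_le_abs_lt (δ := 3 * a - 2) (ε := 1 - c) (by linarith)
    (by linarith), eventually_gt_atTop 0] with m hfar hm
  have hm' : (0 : ℝ) < m := by exact_mod_cast hm
  rw [div_lt_iff₀ hm']
  by_contra! hle
  have hsub : #{r : Fin m → ZMod 3 | ¬hammingNorm r < threshold c m} ≤
      #{r : Fin m → ZMod 3 | (3 * a - 2) * m ≤ |3 * (hammingNorm r : ℝ) - 2 * m|} := by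
    refine Finset.card_le_card (Finset.monotone_filter_right _ fun r _ hr => ?_)
    have : (threshold c m : ℝ) ≤ hammingNorm r := by exact_mod_cast not_lt.1 hr
    exact le_abs.2 (Or.inl (by linarith))
  have hsplit := Finset.card_filter_add_card_filter_not (s := Finset.univ)
    fun r : Fin m → ZMod 3 => hammingNorm r < threshold c m
  rw [Finset.card_univ, Fintype.card_pi, Finset.prod_const, Finset.card_univ, ZMod.card,
    Fintype.card_fin] at hsplit
  have hsplit' : (weightCountBelow m (threshold c m) : ℝ) +
      #{r : Fin m → ZMod 3 | ¬hammingNorm r < threshold c m} = 3 ^ m := by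
    exact_mod_cast hsplit
  have := weightCountBelow_threshold_lt (m := m) hc
  have : (#{r : Fin m → ZMod 3 | ¬hammingNorm r < threshold c m} : ℝ) ≤ _ := Nat.cast_le.2 hsub
  linarith

theorem tendsto_threshold_div (hc : 0 < c) (hc' : c < 1) :
    Tendsto (fun m => (threshold c m : ℝ) / m) atTop (𝓝 (2 / 3)) :=
  tendsto_order.2 ⟨fun _ ha => eventually_lt_threshold_div ha hc hc'.le,
    fun _ ha => eventually_threshold_div_lt ha hc hc'⟩

end Threshold

theorem tendsto_finrank_BiD_threshold {c₁ c₂ : ℝ} (hc₁ : 0 < c₁) (h : c₁ ≤ c₂) (hc₂ : c₂ ≤ 1) :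
    Tendsto
      (fun m => (Module.finrank F2 (BiD m (threshold c₁ m) (threshold c₂ m)) : ℝ) / 3 ^ m)
      atTop (𝓝 (c₂ - c₁)) := by
  refine ((tendsto_weightCountBelow_threshold_succ (hc₁.trans_le h) hc₂).sub
    (tendsto_weightCountBelow_threshold hc₁ (h.trans hc₂))).congr fun m => ?_
  have h₁₂ := threshold_mono (m := m) h hc₂
  have h₂ := threshold_le_self (m := m) hc₂
  rw [finrank_BiD (h₁₂.trans h₂) h₂, ← sub_div,
    ← card_weight_mem_Icc_add_weightCountBelow (a := threshold c₁ m) (by omega)]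
  push_cast
  ring

theorem log_distBound (m : ℕ) (a b : ℤ) :
    Real.log (distBound m a b) = (a + b - m) * Real.log 2 + (m - b) * Real.log 3 := by
  rw [distBound, Real.log_mul (by positivity) (by positivity), Real.log_zpow, Real.log_zpow]
  push_cast
  ring

theorem log_minDist_div_le_one {m : ℕ} (C : Submodule F2 ((Fin m → ZMod 3) → F2)) :
    Real.log (minDist C) / Real.log (3 ^ m) ≤ 1 := by
  have h3m : 0 ≤ Real.log (3 ^ m) := Real.log_nonneg (one_le_pow₀ (by norm_num))
  refine div_le_one_of_le₀ ?_ h3m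
  rcases (minDist C).eq_zero_or_pos with h | h
  · simpa [h] using h3m
  · exact Real.log_le_log (by exact_mod_cast h) (by exact_mod_cast minDist_le C)

theorem le_liminf_log_minDist_BiD {r₁ r₂ : ℕ → ℕ} (hr : ∀ m, r₁ m ≤ r₂ m ∧ r₂ m ≤ m) {ρ₁ ρ₂ : ℝ}
    (h₁ : Tendsto (fun m => (r₁ m : ℝ) / m) atTop (𝓝 ρ₁))
    (h₂ : Tendsto (fun m => (r₂ m : ℝ) / m) atTop (𝓝 ρ₂)) :
    (ρ₁ + ρ₂ - 1) * (Real.log 2 / Real.log 3) + (1 - ρ₂) ≤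
      liminf (fun m => Real.log (minDist (BiD m (r₁ m) (r₂ m))) / Real.log (3 ^ m))
        atTop := by
  have hlog3 : 0 < Real.log 3 := Real.log_pos (by norm_num)
  have hg := (((h₁.add h₂).sub_const 1).mul_const (Real.log 2 / Real.log 3)).add (h₂.const_sub 1)
  rw [← hg.liminf_eq]
  refine liminf_le_liminf ?_ hg.isBoundedUnder_ge
    (isCoboundedUnder_ge_of_le _ fun m => log_minDist_div_le_one _)
  filter_upwards [eventually_gt_atTop 0] with m hm
  have hm' : (0 : ℝ) < m := by exact_mod_cast hm
  have hD := Real.log_le_log (by unfold distBound; positivity)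
    (distBound_le_minDist_BiD (hr m).1 (hr m).2)
  rw [log_distBound] at hD
  rw [Real.log_pow, le_div_iff₀ (by positivity)]
  refine le_of_eq_of_le ?_ hD
  push_cast
  field_simp

theorem log_six_div_log_27_eq :
    (2 / 3 + 2 / 3 - 1) * (Real.log 2 / Real.log 3) + (1 - 2 / 3) = Real.log 6 / Real.log 27 := by
  have h3 : Real.log 3 ≠ 0 := (Real.log_pos (by norm_num)).ne'
  rw [show (6 : ℝ) = 2 * 3 by norm_num, show (27 : ℝ) = 3 ^ 3 by norm_num,
    Real.log_mul two_ne_zero three_ne_zero, Real.log_pow]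
  field_simp
  ring

theorem log_six_div_log_27_gt : (0.543 : ℝ) < Real.log 6 / Real.log 27 := by
  have h3 : 0 < Real.log 3 := Real.log_pos (by norm_num)
  have hpow : Real.log (3 ^ 17) < Real.log (2 ^ 27) := Real.log_lt_log (by positivity) (by norm_num)
  rw [Real.log_pow, Real.log_pow] at hpow
  rw [show (6 : ℝ) = 2 * 3 by norm_num, show (27 : ℝ) = 3 ^ 3 by norm_num,
    Real.log_mul two_ne_zero three_ne_zero, Real.log_pow, lt_div_iff₀ (by positivity)]
  push_cast at hpow ⊢
  linarith

/-- For any rate `R ∈ (0,1)` there is a sequence of BiD codes with rate converging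
to `R`, `r₁/m, r₂/m → 2/3`, and `liminf log d_min / log N ≥ log 6 / log 27 > 0.543`. -/
theorem BiD_asymptotic_minDist (R : ℝ) (hR0 : 0 < R) (hR1 : R < 1) :
    ∃ r₁ r₂ : ℕ → ℕ,
      (∀ m, r₁ m ≤ r₂ m ∧ r₂ m ≤ m) ∧
      Filter.Tendsto (fun m : ℕ =>
          (Module.finrank F2 (BiD m (r₁ m) (r₂ m)) : ℝ) / 3^m) Filter.atTop (nhds R) ∧
      Filter.Tendsto (fun m : ℕ => (r₁ m : ℝ) / m) Filter.atTop (nhds (2/3)) ∧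
      Filter.Tendsto (fun m : ℕ => (r₂ m : ℝ) / m) Filter.atTop (nhds (2/3)) ∧
      Real.log 6 / Real.log 27 ≤
        Filter.liminf (fun m : ℕ =>
          Real.log (minDist (BiD m (r₁ m) (r₂ m))) / Real.log (3^m)) Filter.atTop ∧
      (0.543 : ℝ) < Real.log 6 / Real.log 27 := by
  have hc₁ : 0 < (1 - R) / 2 := by linarith
  have hc₁₂ : (1 - R) / 2 ≤ (1 + R) / 2 := by linarith
  have hc₂ : (1 + R) / 2 < 1 := by linarith
  have hr : ∀ m, threshold ((1 - R) / 2) m ≤ threshold ((1 + R) / 2) m ∧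
      threshold ((1 + R) / 2) m ≤ m :=
    fun m => ⟨threshold_mono hc₁₂ hc₂.le, threshold_le_self hc₂.le⟩
  have h₁ := tendsto_threshold_div hc₁ (hc₁₂.trans_lt hc₂)
  have h₂ := tendsto_threshold_div (hc₁.trans_le hc₁₂) hc₂
  refine ⟨_, _, hr, ?_, h₁, h₂, ?_, log_six_div_log_27_gt⟩
  · convert tendsto_finrank_BiD_threshold hc₁ hc₁₂ hc₂.le using 2
    ring
  · exact log_six_div_log_27_eq ▸ le_liminf_log_minDist_BiD hr h₁ h₂
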